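/- arXiv:2601.08789 — 4 statements merged into one kernel-verified Lean document; each statement's English description precedes it below -/
import Mathlib

section
/- Let R be a domain with center Z = Z(R). Then the center of the central localization Q(R) = Frac(Z) ⊗_Z R is exactly Frac(Z) ⊗_Z 1, i.e. the image of the natural algebra map Frac(Z) → Q(R), f ↦ f ⊗_Z 1. -/
open TensorProduct

set_option synthInstance.maxHeartbeats 1000000
set_option maxHeartbeats 1000000

private lemma aux_rep (R : Type) [Ring R] [IsDomain R]
    (x : TensorProduct (Subring.center R) (FractionRing (Subring.center R)) R) :
    ∃ (s : nonZeroDivisors (Subring.center R)) (r : R),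
      (s : Subring.center R) • x
        = (1 : FractionRing (Subring.center R)) ⊗ₜ[Subring.center R] r := by
  set Z := Subring.center R
  set K := FractionRing Z
  induction x using TensorProduct.induction_on with
  | zero => exact ⟨1, 0, by simp⟩
  | tmul k r =>
    obtain ⟨⟨a, s⟩, rfl⟩ := IsLocalization.mk'_surjective (nonZeroDivisors Z) k
    dsimp only
    refine ⟨s, a • r, ?_⟩
    have h1 : (s : Z) • IsLocalization.mk' K a s = algebraMap Z K a := by
      rw [Algebra.smul_def, IsLocalization.mk'_spec']
    rw [smul_tmul', h1, Algebra.algebraMap_eq_smul_one, smul_tmul]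
  | add x y hx hy =>
    obtain ⟨s, r, hs⟩ := hx
    obtain ⟨t, q, ht⟩ := hy
    refine ⟨s * t, (t : Z) • r + (s : Z) • q, ?_⟩
    have h1 : ((s : Z) * (t : Z)) • x = (t : Z) • ((1 : K) ⊗ₜ[Z] r) := by
      rw [mul_comm, mul_smul, hs]
    have h2 : ((s : Z) * (t : Z)) • y = (s : Z) • ((1 : K) ⊗ₜ[Z] q) := by
      rw [mul_smul, ht]
    rw [Submonoid.coe_mul, smul_add, h1, h2, ← tmul_smul, ← tmul_smul, ← tmul_add]

private lemma aux_inj (R : Type) [Ring R] [IsDomain R] (r : R)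
    (h : (1 : FractionRing (Subring.center R)) ⊗ₜ[Subring.center R] r = 0) : r = 0 := by
  set Z := Subring.center R
  set K := FractionRing Z
  have hLM : IsLocalizedModule (nonZeroDivisors Z) (TensorProduct.mk Z K R 1) :=
    (isLocalizedModule_iff_isBaseChange (nonZeroDivisors Z) K _).mpr
      (TensorProduct.isBaseChange Z R K)
  obtain ⟨s, hs⟩ := (IsLocalizedModule.eq_zero_iff (nonZeroDivisors Z)
    (TensorProduct.mk Z K R 1)).mp h
  have hs' : ((s : Z) : R) * r = 0 := hs
  rcases mul_eq_zero.mp hs' with h' | h'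
  · exact absurd (Subtype.ext h' : (s : Z) = 0) (nonZeroDivisors.coe_ne_zero s)
  · exact h'

/-- for a domain `R` with center `Z`, the center of the central localization
`Q(R) = Frac(Z) ⊗_Z R` is exactly `Frac(Z) ⊗ 1`, i.e. the image of the natural map
`Frac(Z) → Q(R)`, `f ↦ f ⊗ 1`. -/
theorem stmt_3 (R : Type) [Ring R] [IsDomain R] :
    (Subring.center
        (TensorProduct (Subring.center R) (FractionRing (Subring.center R)) R) : Set _)
      = Set.range
          (fun f : FractionRing (Subring.center R) =>
            f ⊗ₜ[Subring.center R] (1 : R)) := by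
  set Z := Subring.center R
  set K := FractionRing Z
  ext x
  simp only [SetLike.mem_coe, Set.mem_range]
  constructor
  · intro hx
    rw [Subring.mem_center_iff] at hx
    obtain ⟨s, r, hs⟩ := aux_rep R x
    have hr : r ∈ Subring.center R := by
      rw [Subring.mem_center_iff]
      intro g
      have h2 : ((s : Z) • x) * ((1 : K) ⊗ₜ[Z] g)
          = ((1 : K) ⊗ₜ[Z] g) * ((s : Z) • x) := by
        rw [smul_mul_assoc, mul_smul_comm, hx ((1 : K) ⊗ₜ[Z] g)]
      rw [hs, Algebra.TensorProduct.tmul_mul_tmul, Algebra.TensorProduct.tmul_mul_tmul,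
        one_mul] at h2
      have key : (1 : K) ⊗ₜ[Z] (g * r - r * g) = 0 := by
        rw [tmul_sub, h2, sub_self]
      have := aux_inj R _ key
      rw [sub_eq_zero] at this
      exact this
    set z : Z := ⟨r, hr⟩ with hz
    set u : K := algebraMap Z K (s : Z) with hudef
    have hu : IsUnit u := IsLocalization.map_units K s
    have hne : u ≠ 0 := hu.ne_zero
    have h2 : u • x = (algebraMap Z K z) ⊗ₜ[Z] (1 : R) := by
      rw [hudef, algebraMap_smul, hs, Algebra.algebraMap_eq_smul_one, smul_tmul]
      congr 1
      show r = (z : R) * 1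
      rw [mul_one]
    refine ⟨u⁻¹ * algebraMap Z K z, ?_⟩
    have : x = (u⁻¹ * algebraMap Z K z) ⊗ₜ[Z] (1 : R) := by
      calc x = (u⁻¹ * u) • x := by rw [inv_mul_cancel₀ hne, one_smul]
        _ = u⁻¹ • (u • x) := mul_smul _ _ _
        _ = u⁻¹ • ((algebraMap Z K z) ⊗ₜ[Z] (1 : R)) := by rw [h2]
        _ = (u⁻¹ * algebraMap Z K z) ⊗ₜ[Z] (1 : R) := by rw [smul_tmul', smul_eq_mul]
    exact this.symm
  · rintro ⟨f, rfl⟩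
    rw [Subring.mem_center_iff]
    intro g
    induction g using TensorProduct.induction_on with
    | zero => simp
    | tmul k r =>
      rw [Algebra.TensorProduct.tmul_mul_tmul, Algebra.TensorProduct.tmul_mul_tmul,
        mul_comm k f, mul_one, one_mul]
    | add a b ha hb => rw [add_mul, mul_add, ha, hb]
end

section
/- Let R and S be domains, let Z₀ ⊆ Z(R) be a subring of the center of R, and let f : R → S be a ring morphism. Assume that the central localization Q(R) = Frac(Z(R)) ⊗_{Z(R)} R is finite-dimensional over the field Frac(Z₀), and that f maps every nonzero element of Z₀ to a nonzero element of the center Z(S) of S. Then f is injective. -/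
/-!
Every `r ∈ R` is algebraic over `Z₀`: `Q(R)` is finite-dimensional, hence algebraic, over
`Frac(Z₀)`, so it is algebraic over `Z₀` itself, and `R` embeds into `Q(R)` because a domain is
torsion-free over its center. If `f r = 0` with `r ≠ 0`, cancel from a relation `p(r) = 0` the
largest power of `r` dividing it (`R` is a domain) to get one with nonzero constant term `c`;
applying `f` kills every other term, so `f c = 0`, contradicting the hypothesis on `f`.
-/

open TensorProduct

set_option synthInstance.maxHeartbeats 1000000
set_option maxHeartbeats 1000000

/-- The central localization `Q(R) = Frac(Z(R)) ⊗_{Z(R)} R` of a ring `R`. -/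
abbrev centralLocalization (R : Type) [Ring R] : Type :=
  TensorProduct (Subring.center R) (FractionRing (Subring.center R)) R

/-- The field morphism `Frac(Z₀) → Frac(Z)` induced by the inclusion of a subring `Z₀ ⊆ Z`
of a commutative domain `Z`. -/
noncomputable def fracLift (Z : Type) [CommRing Z] [IsDomain Z] (Z₀ : Subring Z) :
    FractionRing Z₀ →+* FractionRing Z :=
  IsFractionRing.lift (g := (algebraMap Z (FractionRing Z)).comp Z₀.subtype)
    ((IsFractionRing.injective Z (FractionRing Z)).comp Subtype.val_injective)

open Polynomial in
theorem IsAlgebraic.eq_zero_of_map_eq_zero {A B S : Type*} [CommRing A] [Ring B]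
    [NoZeroDivisors B] [Ring S] [Algebra A B] (f : B →+* S)
    (hf : ∀ a : A, a ≠ 0 → f (algebraMap A B a) ≠ 0)
    {b : B} (hb : IsAlgebraic A b) (hfb : f b = 0) : b = 0 := by
  by_contra hb0
  obtain ⟨p, hp0, hpb⟩ := hb
  obtain ⟨q, hpq, hXq⟩ := exists_eq_pow_rootMultiplicity_mul_and_not_dvd p hp0 0
  rw [C_0, sub_zero] at hpq hXq
  rw [X_dvd_iff] at hXq
  rw [hpq, map_mul, map_pow, aeval_X, mul_eq_zero] at hpb
  have hqb := hpb.resolve_left (pow_ne_zero _ hb0)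
  rw [← divX_mul_X_add q, map_add, map_mul, aeval_X, aeval_C] at hqb
  apply hf _ hXq
  simpa [hfb] using congrArg f hqb

theorem RingHom.injective_of_isAlgebraic {A B S : Type*} [CommRing A] [Ring B]
    [NoZeroDivisors B] [Ring S] [Algebra A B] [Algebra.IsAlgebraic A B] (f : B →+* S)
    (hf : ∀ a : A, a ≠ 0 → f (algebraMap A B a) ≠ 0) : Function.Injective f :=
  (injective_iff_map_eq_zero f).2 fun b =>
    (Algebra.IsAlgebraic.isAlgebraic b).eq_zero_of_map_eq_zero f hf

theorem Algebra.TensorProduct.includeRight_injective_of_isFractionRing {Z K B : Type*}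
    [CommRing Z] [CommRing K] [Algebra Z K] [IsFractionRing Z K] [Ring B] [Algebra Z B]
    [Module.IsTorsionFree Z B] :
    Function.Injective (includeRight : B →ₐ[Z] K ⊗[Z] B) :=
  (IsLocalizedModule.injective_iff_isRegular (nonZeroDivisors Z) (TensorProduct.mk Z K B 1)).2
    fun c => Module.IsTorsionFree.isSMulRegular (isRegular_iff_mem_nonZeroDivisors.2 c.2)

section CentralLocalization

variable {R : Type} [Ring R] [IsDomain R] (Z₀ : Subring (Subring.center R))

/-- The underlying module structure is the `Module.compHom` one of the finiteness hypothesis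
in `stmt_8`. -/
noncomputable abbrev centralLocalization.fracAlgebra :
    Algebra (FractionRing Z₀) (centralLocalization R) :=
  Algebra.compHom _ (fracLift (Subring.center R) Z₀)

attribute [local instance] centralLocalization.fracAlgebra

theorem centralLocalization.isScalarTower_fractionRing :
    IsScalarTower Z₀ (FractionRing Z₀) (centralLocalization R) := by
  refine IsScalarTower.of_algebraMap_eq fun c => ?_
  rw [Algebra.compHom_algebraMap_apply, fracLift, IsFractionRing.lift_algebraMap]
  rfl

theorem centralLocalization.isAlgebraic_of_finite
    [Module.Finite (FractionRing Z₀) (centralLocalization R)] : Algebra.IsAlgebraic Z₀ R := by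
  have := centralLocalization.isScalarTower_fractionRing Z₀
  have := IsLocalization.isAlgebraic (S := FractionRing Z₀) (nonZeroDivisors Z₀)
  have hQ := Algebra.IsAlgebraic.of_finite (FractionRing Z₀) (centralLocalization R)
  have : Algebra.IsAlgebraic Z₀ (centralLocalization R) :=
    ⟨fun q => (hQ.isAlgebraic q).restrictScalars Z₀⟩
  exact .of_injective
    ((Algebra.TensorProduct.includeRight : R →ₐ[_] centralLocalization R).restrictScalars Z₀)
    Algebra.TensorProduct.includeRight_injective_of_isFractionRing

end CentralLocalization

theorem stmt_8_general (R S : Type) [Ring R] [IsDomain R] [Ring S]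
    (Z₀ : Subring (Subring.center R)) (f : R →+* S)
    (hfin :
      letI : Module (FractionRing Z₀) (centralLocalization R) :=
        Module.compHom (centralLocalization R) (fracLift (Subring.center R) Z₀)
      Module.Finite (FractionRing Z₀) (centralLocalization R))
    (hf : ∀ x : Z₀, x ≠ 0 →
      f ((x : Subring.center R) : R) ∈ Subring.center S ∧ f ((x : Subring.center R) : R) ≠ 0) :
    Function.Injective f := by
  have : Algebra.IsAlgebraic Z₀ R := @centralLocalization.isAlgebraic_of_finite _ _ _ Z₀ hfin
  exact f.injective_of_isAlgebraic fun x hx => (hf x hx).2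

/-- let `R, S` be domains, `Z₀ ⊆ Z(R)` a subring of the center of `R`, and
`f : R → S` a ring morphism.  Assume `Q(R)` is finite-dimensional over `Frac(Z₀)` and that `f`
maps every nonzero element of `Z₀` to a nonzero element of the center `Z(S)`.  Then `f` is
injective. -/
theorem stmt_8 (R S : Type) [Ring R] [IsDomain R] [Ring S] [IsDomain S]
    (Z₀ : Subring (Subring.center R)) (f : R →+* S)
    (hfin :
      letI : Module (FractionRing Z₀) (centralLocalization R) :=
        Module.compHom (centralLocalization R) (fracLift (Subring.center R) Z₀)
      Module.Finite (FractionRing Z₀) (centralLocalization R))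
    (hf : ∀ x : Z₀, x ≠ 0 →
      f ((x : Subring.center R) : R) ∈ Subring.center S ∧ f ((x : Subring.center R) : R) ≠ 0) :
    Function.Injective f :=
  stmt_8_general R S Z₀ f hfin hf
end

section
/- Let k be an algebraically closed field and R an associative k-algebra which is a domain, finitely generated as a k-algebra, and finitely generated as a module over its center Z. Then every algebra character χ : Z → k is the central character of some simple R-module which is finite-dimensional over k; i.e. there exists a simple R-module M with dim_k M < ∞ such that z · m = χ(z) m for all z ∈ Z and m ∈ M. -/
set_option synthInstance.maxHeartbeats 1000000
set_option maxHeartbeats 1000000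

/-- The center of a `k`-algebra `R` acts on `R`, turning `R` into an algebra over its center. -/
instance centerAlgebra (k R : Type) [Field k] [Ring R] [Algebra k R] :
    Algebra (Subalgebra.center k R) R :=
  RingHom.toAlgebra' ((Subalgebra.center k R).val.toRingHom)
    (fun c x => (Subalgebra.mem_center_iff.mp c.property x).symm)

/-- let `k` be an algebraically closed field and `R` an associative `k`-algebra
which is a domain, finitely generated as a `k`-algebra and finitely generated as a module over
its center `Z`.  Then every algebra character `χ : Z → k` is the central character of some
simple `R`-module which is finite-dimensional over `k`. -/
theorem stmt_9 (k : Type) [Field k] [IsAlgClosed k]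
    (R : Type) [Ring R] [Algebra k R] [IsDomain R]
    [Algebra.FiniteType k R] [Module.Finite (Subalgebra.center k R) R]
    (χ : Subalgebra.center k R →ₐ[k] k) :
    ∃ (M : Type) (_ : AddCommGroup M) (_ : Module k M) (_ : Module R M)
      (_ : IsScalarTower k R M),
      IsSimpleModule R M ∧ FiniteDimensional k M ∧
      ∀ (z : Subalgebra.center k R) (m : M), (z : R) • m = χ z • m := by
  classical
  let I : Ideal (Subalgebra.center k R) := RingHom.ker (χ : Subalgebra.center k R →+* k)
  -- the left ideal of R generated by the image of I
  let J : Ideal R := Ideal.span ((fun z : Subalgebra.center k R => (z : R)) '' I)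
  -- J is not the whole ring, by Nakayama
  have hJ : J ≠ ⊤ := by
    intro hJtop
    -- every element of R lies in I • ⊤ (as a Z-submodule of R)
    have hle : (⊤ : Submodule (Subalgebra.center k R) R)
        ≤ I • (⊤ : Submodule (Subalgebra.center k R) R) := by
      rintro x -
      have hxJ : x ∈ J := hJtop ▸ Submodule.mem_top
      induction hxJ using Submodule.span_induction with
      | mem y hy =>
        obtain ⟨z, hz, rfl⟩ := hy
        show (z : R) ∈ I • (⊤ : Submodule (Subalgebra.center k R) R)
        have h1 : (z : R) = z • (1 : R) := by
          exact (mul_one _).symm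
        rw [h1]
        exact Submodule.smul_mem_smul hz Submodule.mem_top
      | zero => exact Submodule.zero_mem _
      | add a b _ _ ha hb => exact Submodule.add_mem _ ha hb
      | smul r y _ hy =>
        refine Submodule.smul_induction_on hy ?_ ?_
        · intro z hz n _
          have h1 : r • (z • n) = z • (r • n) := by
            show r * ((z : R) * n) = (z : R) * (r * n)
            rw [← mul_assoc, Subalgebra.mem_center_iff.mp z.property r, mul_assoc]
          rw [h1]
          exact Submodule.smul_mem_smul hz Submodule.mem_top
        · intro a b ha hb
          rw [smul_add]
          exact Submodule.add_mem _ ha hb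
    obtain ⟨r, hr1, hr0⟩ :=
      Submodule.exists_sub_one_mem_and_smul_eq_zero_of_fg_of_le_smul I ⊤
        (Module.Finite.fg_top) hle
    have h0 : r • (1 : R) = 0 := hr0 1 Submodule.mem_top
    have hrR : (r : R) = 0 := by
      exact (mul_one (r : R)).symm.trans h0
    have hr : r = 0 := Subtype.ext hrR
    rw [hr] at hr1
    have h1I : (1 : Subalgebra.center k R) ∈ I := by
      convert I.neg_mem hr1 using 1
      apply Subtype.ext
      change (1 : R) = -((0 : R) - 1)
      simp
    have hχ1 : χ (1 : Subalgebra.center k R) = 0 := h1I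
    rw [map_one] at hχ1
    exact one_ne_zero hχ1
  obtain ⟨m, hmmax, hJm⟩ := Ideal.exists_le_maximal J hJ
  -- key computation: for z in the center, z*r ≡ χ z • r  mod m
  have hkey : ∀ (z : Subalgebra.center k R) (r : R), (z : R) * r - χ z • r ∈ m := by
    intro z r
    set w : Subalgebra.center k R := z - algebraMap k (Subalgebra.center k R) (χ z) with hw
    have hwχ : χ w = 0 := by
      rw [hw, map_sub, AlgHom.commutes]; simp
    have hwI : w ∈ I := by simpa [I, RingHom.mem_ker] using hwχ
    have hwJ : (w : R) ∈ J := Ideal.subset_span ⟨w, hwI, rfl⟩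
    have hwm : (w : R) ∈ m := hJm hwJ
    have hcen : (w : R) * r = r * (w : R) :=
      (Subalgebra.mem_center_iff.mp w.property r).symm
    have hwR : (w : R) = (z : R) - algebraMap k R (χ z) := by
      rw [hw, AddSubgroupClass.coe_sub, Subalgebra.coe_algebraMap]
    have heq : (z : R) * r - χ z • r = r * (w : R) := by
      rw [← hcen, hwR, sub_mul, Algebra.smul_def]
    rw [heq]
    exact m.mul_mem_left r hwm
  refine ⟨R ⧸ m, inferInstance, inferInstance, inferInstance, inferInstance, ?_, ?_, ?_⟩
  · exact isSimpleModule_iff_isCoatom.mpr (Ideal.isMaximal_def.mp hmmax)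
  · -- finite dimensional over k
    obtain ⟨s, hs⟩ := Module.Finite.fg_top (R := Subalgebra.center k R) (M := R)
    have : Module.Finite k (R ⧸ m) := by
      refine ⟨⟨s.image (Submodule.Quotient.mk (p := m)), ?_⟩⟩
      rw [eq_top_iff]
      rintro x -
      obtain ⟨r, rfl⟩ := Submodule.Quotient.mk_surjective m x
      have hr : r ∈ Submodule.span (Subalgebra.center k R) (s : Set R) :=
        hs ▸ Submodule.mem_top
      induction hr using Submodule.span_induction with
      | mem y hy =>
        exact Submodule.subset_span (by simpa using Finset.mem_image_of_mem _ hy)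
      | zero => simp
      | add a b _ _ ha hb =>
        rw [Submodule.Quotient.mk_add]
        exact Submodule.add_mem _ ha hb
      | smul z y _ hy =>
        have h1 : z • y = (z : R) * y := rfl
        have h2 : (Submodule.Quotient.mk (p := m)) ((z : R) * y)
            = χ z • Submodule.Quotient.mk (p := m) y := by
          rw [← sub_eq_zero, ← Submodule.Quotient.mk_smul, ← Submodule.Quotient.mk_sub,
            Submodule.Quotient.mk_eq_zero]
          exact hkey z y
        rw [h1, h2]
        exact Submodule.smul_mem _ _ hy
    exact this
  · intro z x
    obtain ⟨r, rfl⟩ := Submodule.Quotient.mk_surjective m x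
    have h1 : (z : R) • Submodule.Quotient.mk (p := m) r
        = Submodule.Quotient.mk (p := m) ((z : R) * r) := rfl
    rw [h1, ← sub_eq_zero, ← Submodule.Quotient.mk_smul, ← Submodule.Quotient.mk_sub,
      Submodule.Quotient.mk_eq_zero]
    exact hkey z r
end

section
/- Let k be a field and R', R'' commutative k-algebras which are domains such that R' ⊗_k R'' is a domain. Then the map e : Frac(R') ⊗_k Frac(R'') → Frac(R' ⊗_k R'') determined by e((p'/q') ⊗_k (p''/q'')) = (p' ⊗ p'')/(q' ⊗ q'') is a well-defined injective morphism of k-algebras. -/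
open TensorProduct

set_option synthInstance.maxHeartbeats 1000000
set_option maxHeartbeats 1000000

/-- let `k` be a field and `R', R''` commutative `k`-algebras which are domains
such that `R' ⊗_k R''` is a domain.  Then there is a well-defined injective `k`-algebra
morphism `e : Frac(R') ⊗_k Frac(R'') → Frac(R' ⊗_k R'')` determined by
`e((p'/q') ⊗ (p''/q'')) = (p' ⊗ p'')/(q' ⊗ q'')`. -/
theorem stmt_11 (k : Type) [Field k]
    (R' R'' : Type) [CommRing R'] [CommRing R''] [Algebra k R'] [Algebra k R'']
    [IsDomain R'] [IsDomain R''] [IsDomain (TensorProduct k R' R'')] :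
    ∃ e : TensorProduct k (FractionRing R') (FractionRing R'') →ₐ[k]
          FractionRing (TensorProduct k R' R''),
      Function.Injective e ∧
      ∀ (p' q' : R') (p'' q'' : R''), q' ≠ 0 → q'' ≠ 0 →
        e ((algebraMap R' (FractionRing R') p' / algebraMap R' (FractionRing R') q') ⊗ₜ[k]
            (algebraMap R'' (FractionRing R'') p'' / algebraMap R'' (FractionRing R'') q''))
          = algebraMap (TensorProduct k R' R'') (FractionRing (TensorProduct k R' R''))
              (p' ⊗ₜ[k] p'')
            / algebraMap (TensorProduct k R' R'') (FractionRing (TensorProduct k R' R''))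
              (q' ⊗ₜ[k] q'') := by
  classical
  set K' := FractionRing R'
  set K'' := FractionRing R''
  set T := TensorProduct k R' R''
  set L := FractionRing T
  -- inclusion R' → L and R'' → L
  have h1 : Function.Injective (fun x : R' => (x ⊗ₜ[k] (1 : R'') : T)) := by
    have hj : Function.Injective (Algebra.linearMap k R'') :=
      FaithfulSMul.algebraMap_injective k R''
    have := (Module.Flat.lTensor_preserves_injective_linearMap
      (M := R') (Algebra.linearMap k R'') hj).comp
      (TensorProduct.rid k R').symm.injective
    convert this using 1
    funext x
    simp [TensorProduct.rid]
  have h2 : Function.Injective (fun x : R'' => ((1 : R') ⊗ₜ[k] x : T)) := by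
    have hj : Function.Injective (Algebra.linearMap k R') :=
      FaithfulSMul.algebraMap_injective k R'
    have := (Module.Flat.rTensor_preserves_injective_linearMap
      (M := R'') (Algebra.linearMap k R') hj).comp
      (TensorProduct.lid k R'').symm.injective
    convert this using 1
    funext x
    simp [TensorProduct.lid]
  let ι' : R' →ₐ[k] L :=
    (IsScalarTower.toAlgHom k T L).comp Algebra.TensorProduct.includeLeft
  let ι'' : R'' →ₐ[k] L :=
    (IsScalarTower.toAlgHom k T L).comp Algebra.TensorProduct.includeRight
  have hι' : Function.Injective ι' := by
    have : ⇑ι' = (algebraMap T L) ∘ (fun x : R' => (x ⊗ₜ[k] (1 : R'') : T)) := rfl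
    rw [this]
    exact (IsFractionRing.injective T L).comp h1
  have hι'' : Function.Injective ι'' := by
    have : ⇑ι'' = (algebraMap T L) ∘ (fun x : R'' => ((1 : R') ⊗ₜ[k] x : T)) := rfl
    rw [this]
    exact (IsFractionRing.injective T L).comp h2
  let f' : K' →ₐ[k] L := IsFractionRing.liftAlgHom hι'
  let f'' : K'' →ₐ[k] L := IsFractionRing.liftAlgHom hι''
  have hf' : ∀ x : R', f' (algebraMap R' K' x) = algebraMap T L (x ⊗ₜ[k] 1) := fun x =>
    IsFractionRing.lift_algebraMap hι' x
  have hf'' : ∀ x : R'', f'' (algebraMap R'' K'' x) = algebraMap T L (1 ⊗ₜ[k] x) := fun x =>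
    IsFractionRing.lift_algebraMap hι'' x
  let e : TensorProduct k K' K'' →ₐ[k] L := Algebra.TensorProduct.productMap f' f''
  -- the canonical map T → K' ⊗ K''
  let ιT : T →ₐ[k] TensorProduct k K' K'' :=
    Algebra.TensorProduct.map (IsScalarTower.toAlgHom k R' K')
      (IsScalarTower.toAlgHom k R'' K'')
  have hιT : Function.Injective ιT := by
    have heq : ιT.toLinearMap = ((LinearMap.lTensor K' ((IsScalarTower.toAlgHom k R'' K'').toLinearMap)).comp
        (LinearMap.rTensor R'' ((IsScalarTower.toAlgHom k R' K').toLinearMap))) :=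
      TensorProduct.ext' fun a b => rfl
    have hinj : Function.Injective ιT.toLinearMap := by
      rw [heq]
      exact (Module.Flat.lTensor_preserves_injective_linearMap _
          (IsFractionRing.injective R'' K'')).comp
        (Module.Flat.rTensor_preserves_injective_linearMap _ (IsFractionRing.injective R' K'))
    exact hinj
  -- e ∘ ιT = algebraMap
  have hcomp : ∀ t : T, e (ιT t) = algebraMap T L t := by
    intro t
    induction t using TensorProduct.induction_on with
    | zero => simp
    | tmul a b =>
      have : ιT (a ⊗ₜ[k] b) = (algebraMap R' K' a) ⊗ₜ[k] (algebraMap R'' K'' b) := rfl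
      rw [this]
      rw [show e ((algebraMap R' K' a) ⊗ₜ[k] (algebraMap R'' K'' b))
          = f' (algebraMap R' K' a) * f'' (algebraMap R'' K'' b) from rfl]
      rw [hf', hf'', ← map_mul]
      congr 1
      rw [Algebra.TensorProduct.tmul_mul_tmul, mul_one, one_mul]
    | add x y hx hy => rw [map_add, map_add, map_add, hx, hy]
  -- every element has a tensor of denominators
  have hden : ∀ x : TensorProduct k K' K'', ∃ (q' : R') (q'' : R''), q' ≠ 0 ∧ q'' ≠ 0 ∧
      ∃ y : T, ((algebraMap R' K' q') ⊗ₜ[k] (algebraMap R'' K'' q'')) * x = ιT y := by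
    intro x
    induction x with
    | zero =>
      exact ⟨1, 1, one_ne_zero, one_ne_zero, 0, by simp⟩
    | tmul a b =>
      obtain ⟨p', q', hq', ha⟩ := IsFractionRing.div_surjective (A := R') a
      obtain ⟨p'', q'', hq'', hb⟩ := IsFractionRing.div_surjective (A := R'') b
      have hq'0 : q' ≠ 0 := nonZeroDivisors.ne_zero hq'
      have hq''0 : q'' ≠ 0 := nonZeroDivisors.ne_zero hq''
      refine ⟨q', q'', hq'0, hq''0, p' ⊗ₜ[k] p'', ?_⟩
      have hqa : (algebraMap R' K' q') * a = algebraMap R' K' p' := by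
        rw [← ha, mul_div_cancel₀]
        exact fun h => hq'0 (IsFractionRing.injective R' K' (by simpa using h))
      have hqb : (algebraMap R'' K'' q'') * b = algebraMap R'' K'' p'' := by
        rw [← hb, mul_div_cancel₀]
        exact fun h => hq''0 (IsFractionRing.injective R'' K'' (by simpa using h))
      rw [Algebra.TensorProduct.tmul_mul_tmul, hqa, hqb]
      rfl
    | add x y hx hy =>
      obtain ⟨qx', qx'', hqx', hqx'', yx, hyx⟩ := hx
      obtain ⟨qy', qy'', hqy', hqy'', yy, hyy⟩ := hy
      refine ⟨qx' * qy', qx'' * qy'', mul_ne_zero hqx' hqy', mul_ne_zero hqx'' hqy'',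
        (qy' ⊗ₜ[k] qy'') * yx + (qx' ⊗ₜ[k] qx'') * yy, ?_⟩
      have hA : ιT ((qy' : R') ⊗ₜ[k] (qy'' : R'')) =
          (algebraMap R' K' qy') ⊗ₜ[k] (algebraMap R'' K'' qy'') := rfl
      have hB : ιT ((qx' : R') ⊗ₜ[k] (qx'' : R'')) =
          (algebraMap R' K' qx') ⊗ₜ[k] (algebraMap R'' K'' qx'') := rfl
      rw [map_add]
      rw [show ιT ((qy' ⊗ₜ[k] qy'') * yx)
          = ((algebraMap R' K' qy') ⊗ₜ[k] (algebraMap R'' K'' qy'')) * ιT yx from by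
        rw [map_mul, hA]]
      rw [show ιT ((qx' ⊗ₜ[k] qx'') * yy)
          = ((algebraMap R' K' qx') ⊗ₜ[k] (algebraMap R'' K'' qx'')) * ιT yy from by
        rw [map_mul, hB]]
      rw [map_mul, map_mul, ← hyx, ← hyy, ← Algebra.TensorProduct.tmul_mul_tmul]
      ring
  -- the denominators are units in K' ⊗ K''
  have hunit : ∀ (q' : R') (q'' : R''), q' ≠ 0 → q'' ≠ 0 →
      IsUnit (((algebraMap R' K' q') ⊗ₜ[k] (algebraMap R'' K'' q'')) :
        TensorProduct k K' K'') := by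
    intro q' q'' hq' hq''
    have hu' : IsUnit (algebraMap R' K' q') := by
      refine IsUnit.mk0 _ fun h => hq' (IsFractionRing.injective R' K' (by simpa using h))
    have hu'' : IsUnit (algebraMap R'' K'' q'') := by
      refine IsUnit.mk0 _ fun h => hq'' (IsFractionRing.injective R'' K'' (by simpa using h))
    have : ((algebraMap R' K' q') ⊗ₜ[k] (algebraMap R'' K'' q'') : TensorProduct k K' K'')
        = ((algebraMap R' K' q') ⊗ₜ[k] (1 : K'')) * ((1 : K') ⊗ₜ[k] (algebraMap R'' K'' q'')) := by
      rw [Algebra.TensorProduct.tmul_mul_tmul, mul_one, one_mul]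
    rw [this]
    exact ((hu'.map (Algebra.TensorProduct.includeLeft :
        K' →ₐ[k] TensorProduct k K' K'')).mul
      (hu''.map (Algebra.TensorProduct.includeRight :
        K'' →ₐ[k] TensorProduct k K' K'')))
  refine ⟨e, ?_, ?_⟩
  · rw [injective_iff_map_eq_zero]
    intro x hx
    obtain ⟨q', q'', hq', hq'', y, hy⟩ := hden x
    have h0 : algebraMap T L y = 0 := by
      rw [← hcomp, ← hy, map_mul, hx, mul_zero]
    have hy0 : y = 0 := by
      have := IsFractionRing.injective T L
      exact this (by rw [h0, map_zero])
    rw [hy0, map_zero] at hy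
    exact ((hunit q' q'' hq' hq'').mul_right_eq_zero).mp hy
  · intro p' q' p'' q'' hq' hq''
    have hstep : e ((algebraMap R' K' p' / algebraMap R' K' q') ⊗ₜ[k]
        (algebraMap R'' K'' p'' / algebraMap R'' K'' q''))
        = f' (algebraMap R' K' p' / algebraMap R' K' q')
          * f'' (algebraMap R'' K'' p'' / algebraMap R'' K'' q'') := rfl
    rw [hstep, map_div₀, map_div₀, hf', hf', hf'', hf'', div_mul_div_comm,
      ← map_mul, ← map_mul, Algebra.TensorProduct.tmul_mul_tmul,
      Algebra.TensorProduct.tmul_mul_tmul, mul_one, one_mul, mul_one, one_mul]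
end
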